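/- Let k ∈ ℕ and y a binary string with |y| ≥ k+2, and let i(k,y) be the smallest index i with k+2+|y| ≤ t_i. If i(k,y) ≥ 2, then h(|y|) ≥ s_{i(k,y)}/2, where h(n) = 2^{(log₂ n)^{8+4·log₂(log₂(log₂ n))}}. -/
import Mathlib


/-- t_i = 2^(2^(2^i)) -/
def tseq (i : ℕ) : ℕ := 2 ^ (2 ^ (2 ^ i))

/-- s_i = t_i + t_{i+⌊log₂ i⌋} -/
def sseq (i : ℕ) : ℕ := tseq i + tseq (i + Nat.log 2 i)

/-- h(n) = 2^{(log₂ n)^{8 + 4·log₂(log₂(log₂ n))}} -/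
noncomputable def hfun (n : ℝ) : ℝ :=
  (2 : ℝ) ^ ((Real.logb 2 n) ^ (8 + 4 * Real.logb 2 (Real.logb 2 (Real.logb 2 n))))

lemma tseq_mono : Monotone tseq := by
  intro a b hab
  exact Nat.pow_le_pow_right (by norm_num)
    (Nat.pow_le_pow_right (by norm_num) (Nat.pow_le_pow_right (by norm_num) hab))

lemma logb_two_pow (K : ℕ) : Real.logb 2 ((2:ℝ)^K) = K := by
  rw [← Real.rpow_natCast 2 K, Real.logb_rpow (by norm_num) (by norm_num)]

theorem stmt_16 : ∀ (k : ℕ) (y : List Bool) (I : ℕ),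
    k + 2 ≤ y.length →
    k + 2 + y.length ≤ tseq I →
    (∀ j < I, ¬(k + 2 + y.length ≤ tseq j)) →
    2 ≤ I →
    hfun y.length ≥ (sseq I : ℝ) / 2 := by
  intro k y I hlen hle hmin hI
  obtain ⟨m, rfl⟩ := Nat.exists_eq_add_of_le hI
  set L := Nat.log 2 (2 + m) with hL
  -- Step 1: y.length > tseq m
  have hA2 : (2:ℕ) ≤ 2 ^ (2^m) := by
    calc (2:ℕ) = 2^1 := rfl
    _ ≤ 2 ^ (2^m) := Nat.pow_le_pow_right (by norm_num) Nat.one_le_two_pow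
  have hdouble : 2 * tseq m ≤ tseq (1 + m) := by
    unfold tseq
    have hBe : (2:ℕ)^(2^(1+m)) = 2^(2^m) * 2^(2^m) := by
      rw [← pow_add]; congr 1; rw [pow_add]; ring
    have h1 : 2^(2^(2^m)) * 2 = 2^(2^(2^m) + 1) := by rw [pow_succ]
    have h2 : 2^(2^m) + 1 ≤ 2^(2^(1+m)) := by nlinarith [hA2]
    calc 2 * 2^(2^(2^m)) = 2^(2^(2^m)+1) := by rw [mul_comm, h1]
    _ ≤ 2^(2^(2^(1+m))) := Nat.pow_le_pow_right (by norm_num) h2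
  have hkey : tseq m < y.length := by
    have h1 : ¬ (k + 2 + y.length ≤ tseq (1+m)) := hmin (1+m) (by omega)
    omega
  -- Step 2: real facts about A = logb 2 n
  set n : ℝ := (y.length : ℝ) with hn
  have htmn : ((tseq m : ℕ) : ℝ) < n := by rw [hn]; exact_mod_cast hkey
  have hcast : ((tseq m : ℕ) : ℝ) = (2:ℝ) ^ ((2:ℕ)^(2^m) : ℕ) := by
    unfold tseq; push_cast; ring
  set A := Real.logb 2 n with hAdef
  have hA1 : ((2:ℝ)^((2:ℕ)^m : ℕ) : ℝ) < A := by
    have hlt : ((2:ℝ) ^ ((2:ℕ)^(2^m) : ℕ)) < n := hcast ▸ htmn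
    have := Real.logb_lt_logb (b := 2) one_lt_two (by positivity) hlt
    rw [logb_two_pow] at this
    calc ((2:ℝ)^((2:ℕ)^m : ℕ)) = (((2:ℕ)^(2^m) : ℕ) : ℝ) := by push_cast; ring
    _ < A := this
  have hA1' : (1:ℝ) < A := by
    have : (2:ℝ) ≤ (2:ℝ)^((2:ℕ)^m : ℕ) := by
      calc (2:ℝ) = 2^1 := by norm_num
      _ ≤ (2:ℝ)^((2:ℕ)^m : ℕ) := by
        apply pow_le_pow_right₀ (by norm_num) Nat.one_le_two_pow
    linarith
  set B := Real.logb 2 A with hBdef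
  have hB1 : (((2:ℕ)^m : ℕ) : ℝ) < B := by
    have := Real.logb_lt_logb (b := 2) one_lt_two (by positivity) hA1
    rw [logb_two_pow] at this
    exact this
  have hB1' : (1:ℝ) ≤ B := by
    have : (1:ℝ) ≤ (((2:ℕ)^m : ℕ) : ℝ) := by exact_mod_cast Nat.one_le_two_pow
    linarith
  set C := Real.logb 2 B with hCdef
  have hC1 : (m : ℝ) < C := by
    have hcast2 : (((2:ℕ)^m : ℕ) : ℝ) = (2:ℝ)^m := by push_cast; ring
    have := Real.logb_lt_logb (b := 2) one_lt_two (by positivity) (hcast2 ▸ hB1)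
    rwa [logb_two_pow] at this
  -- Step 3: reduce goal
  have hsle : (sseq (2+m) : ℝ) ≤ 2 * (tseq (2+m+L) : ℝ) := by
    have : sseq (2+m) ≤ 2 * tseq (2+m+L) := by
      unfold sseq
      have := tseq_mono (Nat.le_add_right (2+m) L)
      rw [← hL]; omega
    exact_mod_cast this
  have hT : (tseq (2+m+L) : ℝ) ≤ hfun n := by
    unfold hfun
    rw [← hAdef, ← hBdef, ← hCdef]
    have hKcast : ((tseq (2+m+L) : ℕ) : ℝ)
        = (2:ℝ) ^ (((2:ℕ)^(2^(2+m+L)) : ℕ) : ℝ) := by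
      unfold tseq; rw [Real.rpow_natCast]; push_cast; ring
    rw [hKcast]
    apply Real.rpow_le_rpow_of_exponent_le one_le_two
    have hexp : (2:ℕ)^(2+m+L) ≤ 2^m * (4*(2+m)) := by
      have hlog : (2:ℕ)^L ≤ 2 + m := Nat.pow_log_le_self 2 (by omega)
      calc (2:ℕ)^(2+m+L) = 2^m * 4 * 2^L := by rw [pow_add, pow_add]; ring
      _ ≤ 2^m * 4 * (2+m) := Nat.mul_le_mul_left _ hlog
      _ = 2^m * (4*(2+m)) := by ring
    calc (((2:ℕ)^(2^(2+m+L)) : ℕ) : ℝ)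
        ≤ ((2:ℝ)^((2:ℕ)^m : ℕ)) ^ (((4*(2+m) : ℕ) : ℕ) : ℝ) := by
          rw [Real.rpow_natCast, ← pow_mul]
          exact_mod_cast Nat.pow_le_pow_right (by norm_num) hexp
      _ ≤ A ^ (((4*(2+m) : ℕ) : ℕ) : ℝ) :=
          Real.rpow_le_rpow (by positivity) hA1.le (by positivity)
      _ ≤ A ^ (8 + 4 * C) := by
          apply Real.rpow_le_rpow_of_exponent_le hA1'.le
          push_cast; linarith
  rw [ge_iff_le, div_le_iff₀ (by norm_num : (0:ℝ) < 2)]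
  calc (sseq (2+m) : ℝ) ≤ 2 * (tseq (2+m+L) : ℝ) := hsle
  _ ≤ hfun n * 2 := by linarith
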